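/- arXiv:2003.04201 — 4 statements merged into one kernel-verified Lean document; each statement's English description precedes it below -/
import Mathlib

section
/- Let g : ℝ^d → ℝ ∪ {+∞} be proper, convex, lower semicontinuous and let f : ℝ^d → ℝ be a convex differentiable function whose gradient ∇f is L-Lipschitz. Fix x ∈ ℝ^d and a stepsize α with 0 < α ≤ 1/L, and set x⁺ = prox_{αg}(x − α∇f(x)). Then for every z ∈ ℝ^d: (g+f)(x⁺) + (1/(2α))‖x⁺ − z‖² ≤ (g+f)(z) + (1/(2α))‖x − z‖². -/
open scoped InnerProductSpace

/-- Convexity for an extended-real-valued function. -/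
def ERealConvex {d : ℕ} (g : EuclideanSpace ℝ (Fin d) → EReal) : Prop :=
  ∀ x y : EuclideanSpace ℝ (Fin d), ∀ a b : ℝ, 0 ≤ a → 0 ≤ b → a + b = 1 →
    g (a • x + b • y) ≤ (a : EReal) * g x + (b : EReal) * g y

/-- `g` is proper: it never takes the value `⊥` and is not identically `⊤`. -/
def ERealProper {d : ℕ} (g : EuclideanSpace ℝ (Fin d) → EReal) : Prop :=
  (∀ x, g x ≠ ⊥) ∧ (∃ x, g x ≠ ⊤)

/-- `p = prox_{αg}(y)`, i.e. `p` minimizes `z ↦ g z + (1/(2α))‖z - y‖²`. -/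
def IsProx {d : ℕ} (g : EuclideanSpace ℝ (Fin d) → EReal) (α : ℝ)
    (y p : EuclideanSpace ℝ (Fin d)) : Prop :=
  ∀ z, g p + ((1 / (2 * α) * ‖p - y‖ ^ 2 : ℝ) : EReal)
      ≤ g z + ((1 / (2 * α) * ‖z - y‖ ^ 2 : ℝ) : EReal)

/-! The prox point `p` of `y` satisfies the three-point inequality
`g p + (‖p - y‖² + ‖p - z‖²) / (2α) ≤ g z + ‖z - y‖² / (2α)`: comparing `p` with the points of the
segment `[p, z]` and using convexity of `g` gives `g p ≤ g z + ⟪p - y, z - p⟫ / α` after `t → 0⁺`.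
For `y = x - α ∇f(x)` the gradient terms become linear, and the descent lemma
`f x⁺ ≤ f x + ⟪∇f x, x⁺ - x⟫ + L/2 ‖x⁺ - x‖²` (with `L ≤ 1/α`) combined with the gradient
inequality `f x + ⟪∇f x, z - x⟫ ≤ f z` absorbs them. -/

open Set Filter Topology

section Smooth

variable {E : Type*} [NormedAddCommGroup E] [InnerProductSpace ℝ E] [CompleteSpace E]
  {f : E → ℝ} {f' : E → E}

theorem HasGradientAt.hasDerivAt_comp_add_smul {x v : E} {t : ℝ} {g : E}
    (hf : HasGradientAt f g (x + t • v)) :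
    HasDerivAt (fun s : ℝ => f (x + s • v)) ⟪g, v⟫_ℝ t := by
  have hline : HasDerivAt (fun s : ℝ => x + s • v) v t := by
    simpa using ((hasDerivAt_id t).smul_const v).const_add x
  have h := (hasGradientAt_iff_hasFDerivAt.mp hf).comp_hasDerivAt t hline
  simp only [InnerProductSpace.toDual_apply_apply] at h
  exact h

theorem ConvexOn.add_inner_gradient_le (hf : ConvexOn ℝ univ f) {x g : E}
    (hg : HasGradientAt f g x) (z : E) :
    f x + ⟪g, z - x⟫_ℝ ≤ f z := by
  have hline : ConvexOn ℝ univ (fun t : ℝ => f (x + t • (z - x))) := by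
    have := hf.comp_affineMap (AffineMap.lineMap x z : ℝ →ᵃ[ℝ] E)
    simp only [Function.comp_def, AffineMap.lineMap_apply_module, preimage_univ] at this
    refine this.congr fun t _ => ?_
    simp only
    congr 1
    module
  have hderiv : HasDerivAt (fun t : ℝ => f (x + t • (z - x))) ⟪g, z - x⟫_ℝ 0 :=
    HasGradientAt.hasDerivAt_comp_add_smul (by simpa using hg)
  have := hline.le_slope_of_hasDerivAt (mem_univ 0) (mem_univ 1) zero_lt_one hderiv
  norm_num [slope_def_field] at this
  linarith

theorem le_add_inner_add_sq_of_gradient_lipschitz {L : ℝ} (hf : ∀ y, HasGradientAt f (f' y) y)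
    {x : E} (hlip : ∀ y, ‖f' y - f' x‖ ≤ L * ‖y - x‖) (y : E) :
    f y ≤ f x + ⟪f' x, y - x⟫_ℝ + L / 2 * ‖y - x‖ ^ 2 := by
  set v := y - x
  have hderiv (t : ℝ) : HasDerivAt (fun s : ℝ => f (x + s • v)) ⟪f' (x + t • v), v⟫_ℝ t :=
    (hf _).hasDerivAt_comp_add_smul
  have hbound (t : ℝ) : HasDerivAt (fun s : ℝ => f x + s * ⟪f' x, v⟫_ℝ + L / 2 * ‖v‖ ^ 2 * s ^ 2)
      (⟪f' x, v⟫_ℝ + L * ‖v‖ ^ 2 * t) t := by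
    refine ((((hasDerivAt_id' t).mul_const _).const_add (f x)).add
      ((hasDerivAt_pow 2 t).const_mul (L / 2 * ‖v‖ ^ 2))).congr_deriv ?_
    push_cast
    ring
  have hslope (t : ℝ) (ht : t ∈ Ico (0 : ℝ) 1) :
      ⟪f' (x + t • v), v⟫_ℝ ≤ ⟪f' x, v⟫_ℝ + L * ‖v‖ ^ 2 * t := by
    have hdist : ‖f' (x + t • v) - f' x‖ ≤ L * t * ‖v‖ := by
      simpa [norm_smul, abs_of_nonneg ht.1, mul_assoc] using hlip (x + t • v)
    have := (real_inner_le_norm (f' (x + t • v) - f' x) v).trans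
      (mul_le_mul_of_nonneg_right hdist (norm_nonneg v))
    rw [inner_sub_left] at this
    linarith
  have := image_le_of_deriv_right_le_deriv_boundary
    (fun t _ => (hderiv t).continuousAt.continuousWithinAt)
    (fun t _ => (hderiv t).hasDerivWithinAt) (by simp)
    (fun t _ => (hbound t).continuousAt.continuousWithinAt)
    (fun t _ => (hbound t).hasDerivWithinAt) hslope (right_mem_Icc.mpr zero_le_one)
  simpa [v] using this

end Smooth

theorem EReal.add_coe_le_add_coe {a b : EReal} {r s r' s' : ℝ} (h : a + r ≤ b + s)
    (h' : r' - r ≤ s' - s) : a + r' ≤ b + s' :=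
  calc a + r' = a + r + ((r' - r : ℝ) : EReal) := by
        rw [add_assoc, ← EReal.coe_add, add_sub_cancel]
    _ ≤ b + s + ((s' - s : ℝ) : EReal) := add_le_add h (EReal.coe_le_coe_iff.mpr h')
    _ = b + s' := by rw [add_assoc, ← EReal.coe_add, add_sub_cancel]

theorem one_div_two_mul_norm_add_smul_sq {E : Type*} [NormedAddCommGroup E]
    [InnerProductSpace ℝ E] {α : ℝ} (hα : α ≠ 0) (u v : E) :
    1 / (2 * α) * ‖u + α • v‖ ^ 2 = 1 / (2 * α) * ‖u‖ ^ 2 + ⟪u, v⟫_ℝ + α / 2 * ‖v‖ ^ 2 := by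
  rw [norm_add_sq_real, real_inner_smul_right, norm_smul, mul_pow, Real.norm_eq_abs, sq_abs]
  field_simp

namespace IsProx

variable {d : ℕ} {g : EuclideanSpace ℝ (Fin d) → EReal} {α : ℝ} {y p : EuclideanSpace ℝ (Fin d)}

theorem le_add_inner (hα : 0 < α) (hg : ERealConvex g) (hp : IsProx g α y p)
    {z : EuclideanSpace ℝ (Fin d)} {a b : ℝ} (ha : g p = a) (hb : g z = b) :
    a ≤ b + 1 / α * ⟪p - y, z - p⟫_ℝ := by
  have hsegment (t : ℝ) (ht : t ∈ Ioc (0 : ℝ) 1) :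
      a ≤ b + 1 / α * ⟪p - y, z - p⟫_ℝ + t * (1 / (2 * α) * ‖z - p‖ ^ 2) := by
    have hconv : g ((1 - t) • p + t • z) ≤ (((1 - t) * a + t * b : ℝ) : EReal) := by
      have := hg p z (1 - t) t (by linarith [ht.2]) ht.1.le (by ring)
      rw [ha, hb] at this
      exact_mod_cast this
    have hmin := (hp _).trans (add_le_add_left hconv _)
    rw [ha, ← EReal.coe_add, ← EReal.coe_add, EReal.coe_le_coe_iff,
      show (1 - t) • p + t • z - y = p - y + t • (z - p) by module, norm_add_sq_real,
      real_inner_smul_right, norm_smul, mul_pow, Real.norm_eq_abs, sq_abs] at hmin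
    have h2α : 1 / α = 2 * (1 / (2 * α)) := by field_simp
    rw [h2α]
    refine le_of_mul_le_mul_left ?_ ht.1
    linarith
  have hlim : Tendsto (fun t : ℝ => b + 1 / α * ⟪p - y, z - p⟫_ℝ + t * (1 / (2 * α) * ‖z - p‖ ^ 2))
      (𝓝[>] 0) (𝓝 (b + 1 / α * ⟪p - y, z - p⟫_ℝ)) :=
    ((continuous_const.add (continuous_id.mul continuous_const)).tendsto' _ _
      (by simp)).mono_left nhdsWithin_le_nhds
  exact ge_of_tendsto hlim (eventually_of_mem (Ioc_mem_nhdsGT zero_lt_one) hsegment)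

theorem three_point (hα : 0 < α) (hg : ERealConvex g) (hp : IsProx g α y p)
    (z : EuclideanSpace ℝ (Fin d)) :
    g p + ((1 / (2 * α) * (‖p - y‖ ^ 2 + ‖p - z‖ ^ 2) : ℝ) : EReal)
      ≤ g z + ((1 / (2 * α) * ‖z - y‖ ^ 2 : ℝ) : EReal) := by
  rcases eq_or_ne (g z) ⊤ with hz_top | hz_top
  · rw [hz_top, EReal.top_add_coe]
    exact le_top
  rcases eq_or_ne (g p) ⊥ with hp_bot | hp_bot
  · rw [hp_bot, EReal.bot_add]
    exact bot_le
  have hpz := hp z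
  have hp_top : g p ≠ ⊤ := by
    intro h
    rw [h, EReal.top_add_coe, top_le_iff] at hpz
    exact EReal.add_ne_top hz_top (EReal.coe_ne_top _) hpz
  have hz_bot : g z ≠ ⊥ := by
    intro h
    rw [h, EReal.bot_add, le_bot_iff, EReal.add_eq_bot_iff] at hpz
    exact hpz.elim hp_bot (EReal.coe_ne_bot _)
  obtain ⟨a, ha⟩ : ∃ a : ℝ, g p = a := ⟨_, (EReal.coe_toReal hp_top hp_bot).symm⟩
  obtain ⟨b, hb⟩ : ∃ b : ℝ, g z = b := ⟨_, (EReal.coe_toReal hz_top hz_bot).symm⟩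
  have hvi := hp.le_add_inner hα hg ha hb
  have hsplit : ‖z - y‖ ^ 2 = ‖p - z‖ ^ 2 + 2 * ⟪p - y, z - p⟫_ℝ + ‖p - y‖ ^ 2 := by
    rw [show z - y = (z - p) + (p - y) by abel, norm_add_sq_real, norm_sub_rev z p,
      real_inner_comm]
  rw [ha, hb, ← EReal.coe_add, ← EReal.coe_add, EReal.coe_le_coe_iff, hsplit]
  have h2α : 1 / α = 2 * (1 / (2 * α)) := by field_simp
  rw [h2α] at hvi
  linarith

end IsProx

theorem proxGrad_decrease_general {d : ℕ} {L : ℝ}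
    (g : EuclideanSpace ℝ (Fin d) → EReal)
    (hg_convex : ERealConvex g)
    (f : EuclideanSpace ℝ (Fin d) → ℝ)
    (f' : EuclideanSpace ℝ (Fin d) → EuclideanSpace ℝ (Fin d))
    (hf_convex : ConvexOn ℝ Set.univ f)
    (hf_diff : ∀ y, HasGradientAt f (f' y) y)
    (hf_lip : ∀ x y, ‖f' x - f' y‖ ≤ L * ‖x - y‖)
    (x : EuclideanSpace ℝ (Fin d)) (α : ℝ) (hα : 0 < α) (hαL : α ≤ 1 / L)
    (xp : EuclideanSpace ℝ (Fin d))
    (hxp : IsProx g α (x - α • f' x) xp) :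
    ∀ z : EuclideanSpace ℝ (Fin d),
      g xp + ((f xp + 1 / (2 * α) * ‖xp - z‖ ^ 2 : ℝ) : EReal)
        ≤ g z + ((f z + 1 / (2 * α) * ‖x - z‖ ^ 2 : ℝ) : EReal) := by
  intro z
  have hL : 0 < L := by
    by_contra! hL
    exact absurd (hαL.trans (one_div_nonpos.mpr hL)) hα.not_ge
  have hLα : L ≤ 1 / α := (le_one_div hα hL).mp hαL
  have hdescent := le_add_inner_add_sq_of_gradient_lipschitz hf_diff (hf_lip · x) xp
  have hgradient := hf_convex.add_inner_gradient_le (hf_diff x) z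
  refine EReal.add_coe_le_add_coe (hxp.three_point hα hg_convex z) ?_
  rw [show xp - (x - α • f' x) = xp - x + α • f' x by abel,
    show z - (x - α • f' x) = z - x + α • f' x by abel, mul_add,
    one_div_two_mul_norm_add_smul_sq hα.ne', one_div_two_mul_norm_add_smul_sq hα.ne',
    norm_sub_rev x z, real_inner_comm (f' x), real_inner_comm (f' x)]
  have hstep : L / 2 ≤ 1 / (2 * α) := by
    rw [show 1 / (2 * α) = 1 / α / 2 by ring]
    linarith
  linarith [mul_le_mul_of_nonneg_right hstep (sq_nonneg ‖xp - x‖)]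

/-- Decrease lemma for the proximal-gradient step `x⁺ = prox_{αg}(x - α∇f(x))` with
`0 < α ≤ 1/L`:  `(g+f)(x⁺) + (1/(2α))‖x⁺ - z‖² ≤ (g+f)(z) + (1/(2α))‖x - z‖²`. -/
theorem proxGrad_decrease {d : ℕ} {L : ℝ}
    (g : EuclideanSpace ℝ (Fin d) → EReal)
    (hg_proper : ERealProper g) (hg_convex : ERealConvex g)
    (hg_lsc : LowerSemicontinuous g)
    (f : EuclideanSpace ℝ (Fin d) → ℝ)
    (f' : EuclideanSpace ℝ (Fin d) → EuclideanSpace ℝ (Fin d))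
    (hf_convex : ConvexOn ℝ Set.univ f)
    (hf_diff : ∀ y, HasGradientAt f (f' y) y)
    (hf_lip : ∀ x y, ‖f' x - f' y‖ ≤ L * ‖x - y‖)
    (x : EuclideanSpace ℝ (Fin d)) (α : ℝ) (hα : 0 < α) (hαL : α ≤ 1 / L)
    (xp : EuclideanSpace ℝ (Fin d))
    (hxp : IsProx g α (x - α • f' x) xp) :
    ∀ z : EuclideanSpace ℝ (Fin d),
      g xp + ((f xp + 1 / (2 * α) * ‖xp - z‖ ^ 2 : ℝ) : EReal)
        ≤ g z + ((f z + 1 / (2 * α) * ‖x - z‖ ^ 2 : ℝ) : EReal) :=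
  proxGrad_decrease_general g hg_convex f f' hf_convex hf_diff hf_lip x α hα hαL xp hxp
end

section
/- Let g : ℝ^d → ℝ ∪ {+∞} be proper, convex, lower semicontinuous and let f : ℝ^d → ℝ be convex and differentiable. Let (α_k)_{k∈ℕ} be positive stepsizes and let (x_k)_{k∈ℕ} satisfy x_{k+1} = prox_{α_k g}(x_k − α_k ∇f(x_k)) together with the backtracking descent condition f(x_{k+1}) ≤ f(x_k) + ⟨∇f(x_k), x_{k+1} − x_k⟩ + (1/(2α_k))‖x_{k+1} − x_k‖² for every k ≥ 0. Then the sequence (x_k)_{k∈ℕ} is self-contracted. -/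
/-!
Write `F = f + g`. The prox step satisfies the variational inequality
`g p + ⟪y - p, z - p⟫ / α ≤ g z`; together with the gradient inequality of the convex `f` and the
descent condition it gives the three-point inequality
`F x_{k+1} + (‖z - x_{k+1}‖² - ‖z - x_k‖²) / (2 α_k) ≤ F z` for every `z` in the domain of `g`.
With `z = x_k` it shows that `F x_k` is nonincreasing for `k ≥ 1` (the iterates lie in the domain
of `g` from `k = 1` on); with `z = x_m`, `m > k`, it then gives `‖x_m - x_{k+1}‖ ≤ ‖x_m - x_k‖`,
and chaining these steps from `k₁` to `k₂` gives self-contractedness.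
-/

open scoped InnerProductSpace

/-- A sequence `x : ℕ → ℝ^d` is self-contracted if for all `k₁ ≤ k₂ ≤ k₃`,
`‖x k₃ - x k₂‖ ≤ ‖x k₃ - x k₁‖`. -/
def SelfContracted {d : ℕ} (x : ℕ → EuclideanSpace ℝ (Fin d)) : Prop :=
  ∀ k₁ k₂ k₃ : ℕ, k₁ ≤ k₂ → k₂ ≤ k₃ → ‖x k₃ - x k₂‖ ≤ ‖x k₃ - x k₁‖

open Set Filter Topology

theorem le_of_forall_le_add_mul {a b C : ℝ} (h : ∀ t : ℝ, 0 < t → t ≤ 1 → a ≤ b + t * C) :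
    a ≤ b := by
  have hlim : Tendsto (fun t : ℝ => b + t * C) (𝓝[>] 0) (𝓝 b) := by
    have : Continuous fun t : ℝ => b + t * C := by fun_prop
    simpa using (this.tendsto 0).mono_left nhdsWithin_le_nhds
  refine ge_of_tendsto hlim ?_
  filter_upwards [Ioc_mem_nhdsGT zero_lt_one] with t ht using h t ht.1 ht.2

theorem ConvexOn.add_le_of_hasFDerivAt {E : Type*} [NormedAddCommGroup E] [NormedSpace ℝ E]
    {s : Set E} {f : E → ℝ} {f' : StrongDual ℝ E} {w z : E} (hf : ConvexOn ℝ s f)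
    (hw : w ∈ s) (hz : z ∈ s) (hf' : HasFDerivAt f f' w) :
    f w + f' (z - w) ≤ f z := by
  let ℓ : ℝ →ᵃ[ℝ] E := AffineMap.lineMap w z
  have hline : ConvexOn ℝ (ℓ ⁻¹' s) (f ∘ ℓ) := hf.comp_affineMap ℓ
  have hderiv : HasDerivAt (f ∘ ℓ) (f' (z - w)) 0 := by
    refine HasFDerivAt.comp_hasDerivAt _ ?_ AffineMap.hasDerivAt_lineMap
    simpa [ℓ] using hf'
  have := hline.le_slope_of_hasDerivAt (x := 0) (y := 1) (by simpa [ℓ] using hw)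
    (by simpa [ℓ] using hz) zero_lt_one hderiv
  simp only [slope_def_field, Function.comp_apply, ℓ, AffineMap.lineMap_apply_one,
    AffineMap.lineMap_apply_zero, sub_zero, div_one] at this
  linarith

theorem ConvexOn.add_inner_le_of_hasGradientAt {E : Type*} [NormedAddCommGroup E]
    [InnerProductSpace ℝ E] [CompleteSpace E] {s : Set E} {f : E → ℝ} {v w z : E}
    (hf : ConvexOn ℝ s f) (hw : w ∈ s) (hz : z ∈ s) (hv : HasGradientAt f v w) :
    f w + ⟪v, z - w⟫_ℝ ≤ f z := by
  simpa using hf.add_le_of_hasFDerivAt hw hz hv.hasFDerivAt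

namespace IsProx

variable {d : ℕ} {g : EuclideanSpace ℝ (Fin d) → EReal} {α : ℝ} {y p z : EuclideanSpace ℝ (Fin d)}

theorem ne_top (hprox : IsProx g α y p) (hz : g z ≠ ⊤) : g p ≠ ⊤ := by
  intro hp
  have h := hprox z
  rw [hp, EReal.top_add_coe, top_le_iff] at h
  exact EReal.add_lt_top hz (EReal.coe_ne_top _) |>.ne h

/-- Compare `p` with the points `p + t • (z - p)` of the segment towards `z` and let `t → 0`. -/
theorem toReal_add_inner_div_le (hg : ERealConvex g) (hbot : ∀ x, g x ≠ ⊥) (hα : 0 < α)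
    (hprox : IsProx g α y p) (hz : g z ≠ ⊤) :
    (g p).toReal + ⟪y - p, z - p⟫_ℝ / α ≤ (g z).toReal := by
  obtain ⟨a, ha⟩ : ∃ a : ℝ, g p = a := ⟨_, (EReal.coe_toReal (hprox.ne_top hz) (hbot p)).symm⟩
  obtain ⟨b, hb⟩ : ∃ b : ℝ, g z = b := ⟨_, (EReal.coe_toReal hz (hbot z)).symm⟩
  set c := 1 / (2 * α)
  have hsegment : ∀ t : ℝ, 0 < t → t ≤ 1 →
      a ≤ b + 2 * c * ⟪p - y, z - p⟫_ℝ + t * (c * ‖z - p‖ ^ 2) := by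
    intro t ht ht1
    have hconv : g (p + t • (z - p)) ≤ ((1 - t) * a + t * b : ℝ) := by
      have h := hg p z (1 - t) t (by linarith) ht.le (by ring)
      rw [ha, hb] at h
      convert h using 2
      · module
      · push_cast; rfl
    have hmin : a + c * ‖p - y‖ ^ 2 ≤ (1 - t) * a + t * b + c * ‖p + t • (z - p) - y‖ ^ 2 := by
      have h := (hprox (p + t • (z - p))).trans (add_le_add_left hconv _)
      rw [ha] at h
      exact_mod_cast h
    have hexpand : ‖p + t • (z - p) - y‖ ^ 2
        = ‖p - y‖ ^ 2 + 2 * t * ⟪p - y, z - p⟫_ℝ + t ^ 2 * ‖z - p‖ ^ 2 := by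
      rw [show p + t • (z - p) - y = (p - y) + t • (z - p) by abel, norm_add_sq_real,
        real_inner_smul_right, norm_smul, Real.norm_of_nonneg ht.le]
      ring
    rw [hexpand] at hmin
    nlinarith
  have hinner : ⟪y - p, z - p⟫_ℝ / α = -(2 * c * ⟪p - y, z - p⟫_ℝ) := by
    rw [← neg_sub p y, inner_neg_left]
    simp only [c]
    field_simp
  have := le_of_forall_le_add_mul hsegment
  rw [ha, hb, EReal.toReal_coe, EReal.toReal_coe, hinner]
  linarith

end IsProx

section

variable {d : ℕ}

theorem IsProx.proxGrad_step {g : EuclideanSpace ℝ (Fin d) → EReal} (hg : ERealConvex g)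
    (hbot : ∀ x, g x ≠ ⊥) {f : EuclideanSpace ℝ (Fin d) → ℝ} (hf : ConvexOn ℝ univ f)
    {α : ℝ} (hα : 0 < α) {v x x' z : EuclideanSpace ℝ (Fin d)} (hv : HasGradientAt f v x)
    (hprox : IsProx g α (x - α • v) x')
    (hdescent : f x' ≤ f x + ⟪v, x' - x⟫_ℝ + 1 / (2 * α) * ‖x' - x‖ ^ 2) (hz : g z ≠ ⊤) :
    f x' + (g x').toReal + 1 / (2 * α) * (‖z - x'‖ ^ 2 - ‖z - x‖ ^ 2) ≤ f z + (g z).toReal := by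
  have hvi := hprox.toReal_add_inner_div_le hg hbot hα hz
  have hgrad := hf.add_inner_le_of_hasGradientAt (mem_univ x) (mem_univ z) hv
  have hprox_inner : ⟪x - α • v - x', z - x'⟫_ℝ / α
      = -(2 * (1 / (2 * α)) * ⟪x' - x, z - x'⟫_ℝ) - ⟪v, z - x'⟫_ℝ := by
    rw [show x - α • v - x' = -(x' - x) - α • v by abel, inner_sub_left, inner_neg_left,
      real_inner_smul_left]
    field_simp
  have hgrad_inner : ⟪v, z - x⟫_ℝ = ⟪v, z - x'⟫_ℝ + ⟪v, x' - x⟫_ℝ := by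
    rw [← inner_add_right, sub_add_sub_cancel]
  have hnorm : ‖z - x‖ ^ 2 = ‖z - x'‖ ^ 2 + 2 * ⟪x' - x, z - x'⟫_ℝ + ‖x' - x‖ ^ 2 := by
    rw [← sub_add_sub_cancel z x' x, norm_add_sq_real, real_inner_comm]
  rw [hprox_inner] at hvi
  rw [hnorm]
  linarith

theorem selfContracted_of_threePoint {x : ℕ → EuclideanSpace ℝ (Fin d)} {F c : ℕ → ℝ}
    (hc : ∀ k, 0 < c k)
    (hstep : ∀ k m, 1 ≤ m → F (k + 1) + c k * (‖x m - x (k + 1)‖ ^ 2 - ‖x m - x k‖ ^ 2) ≤ F m) :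
    SelfContracted x := by
  have hdecr : ∀ m, 1 ≤ m → F (m + 1) ≤ F m := fun m hm => by
    have h := hstep m m hm
    rw [sub_self, norm_zero] at h
    nlinarith [hc m, sq_nonneg ‖x m - x (m + 1)‖]
  have hanti : ∀ k m, k + 1 ≤ m → F m ≤ F (k + 1) := by
    intro k m hkm
    induction m, hkm using Nat.le_induction with
    | base => exact le_rfl
    | succ m hkm ih => exact (hdecr m (by omega)).trans ih
  have hnext : ∀ k m, k + 1 ≤ m → ‖x m - x (k + 1)‖ ≤ ‖x m - x k‖ := by
    intro k m hkm
    have h := hstep k m (by omega)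
    have hsq : ‖x m - x (k + 1)‖ ^ 2 ≤ ‖x m - x k‖ ^ 2 := by
      nlinarith [hc k, hanti k m hkm]
    exact pow_le_pow_iff_left₀ (norm_nonneg _) (norm_nonneg _) two_ne_zero |>.mp hsq
  intro k₁ k₂ k₃ h₁₂ h₂₃
  induction k₂, h₁₂ using Nat.le_induction with
  | base => exact le_rfl
  | succ n _ ih => exact (hnext n k₃ h₂₃).trans (ih (by omega))

end

theorem proxGrad_backtracking_selfContracted_general {d : ℕ}
    (g : EuclideanSpace ℝ (Fin d) → EReal)
    (hg_proper : ERealProper g) (hg_convex : ERealConvex g)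
    (f : EuclideanSpace ℝ (Fin d) → ℝ)
    (f' : EuclideanSpace ℝ (Fin d) → EuclideanSpace ℝ (Fin d))
    (hf_convex : ConvexOn ℝ Set.univ f)
    (hf_diff : ∀ y, HasGradientAt f (f' y) y)
    (α : ℕ → ℝ) (hα : ∀ k, 0 < α k)
    (x : ℕ → EuclideanSpace ℝ (Fin d))
    (hx : ∀ k, IsProx g (α k) (x k - α k • f' (x k)) (x (k + 1)))
    (hbt : ∀ k, f (x (k + 1)) ≤
      f (x k) + ⟪f' (x k), x (k + 1) - x k⟫_ℝ
        + 1 / (2 * α k) * ‖x (k + 1) - x k‖ ^ 2) :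
    SelfContracted x := by
  obtain ⟨hbot, z₀, hz₀⟩ := hg_proper
  have hfinite : ∀ m, 1 ≤ m → g (x m) ≠ ⊤ := fun m hm => by
    obtain ⟨k, rfl⟩ := Nat.exists_eq_add_of_le' hm
    exact (hx k).ne_top hz₀
  exact selfContracted_of_threePoint (F := fun k => f (x k) + (g (x k)).toReal)
    (fun k => one_div_pos.2 (mul_pos two_pos (hα k))) fun k m hm =>
      (hx k).proxGrad_step hg_convex hbot hf_convex (hα k) (hf_diff (x k)) (hbt k) (hfinite m hm)

/-- Proximal-gradient with a backtracking descent condition generates a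
self-contracted sequence. -/
theorem proxGrad_backtracking_selfContracted {d : ℕ}
    (g : EuclideanSpace ℝ (Fin d) → EReal)
    (hg_proper : ERealProper g) (hg_convex : ERealConvex g)
    (hg_lsc : LowerSemicontinuous g)
    (f : EuclideanSpace ℝ (Fin d) → ℝ)
    (f' : EuclideanSpace ℝ (Fin d) → EuclideanSpace ℝ (Fin d))
    (hf_convex : ConvexOn ℝ Set.univ f)
    (hf_diff : ∀ y, HasGradientAt f (f' y) y)
    (α : ℕ → ℝ) (hα : ∀ k, 0 < α k)
    (x : ℕ → EuclideanSpace ℝ (Fin d))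
    (hx : ∀ k, IsProx g (α k) (x k - α k • f' (x k)) (x (k + 1)))
    (hbt : ∀ k, f (x (k + 1)) ≤
      f (x k) + ⟪f' (x k), x (k + 1) - x k⟫_ℝ
        + 1 / (2 * α k) * ‖x (k + 1) - x k‖ ^ 2) :
    SelfContracted x :=
  proxGrad_backtracking_selfContracted_general g hg_proper hg_convex f f' hf_convex hf_diff α hα x
    hx hbt
end

section
/- Let g : ℝ^d → ℝ ∪ {+∞} be proper, convex, lower semicontinuous and let f : ℝ^d → ℝ be a convex differentiable function whose gradient ∇f is L-Lipschitz. Let (x_k) be a proximal-gradient sequence with stepsizes α_k ∈ (0, 1/L], i.e. x_{k+1} = prox_{α_k g}(x_k − α_k ∇f(x_k)). Then for every global minimizer z of g + f and every k ≥ 0, ‖x_{k+1} − z‖ ≤ ‖x_k − z‖ (Fejér monotonicity with respect to the set of minimizers). -/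
open RealInnerProductSpace Set Filter Topology AffineMap

theorem norm_sub_le_of_neg_half_le_inner {E : Type*} [NormedAddCommGroup E]
    [InnerProductSpace ℝ E] {x p z : E} (h : -(‖p - x‖ ^ 2 / 2) ≤ ⟪p - x, z - p⟫) :
    ‖p - z‖ ≤ ‖x - z‖ := by
  have hexp : ‖x - z‖ ^ 2 = ‖p - x‖ ^ 2 + 2 * ⟪p - x, z - p⟫ + ‖p - z‖ ^ 2 := by
    have hflip : ⟪x - p, p - z⟫ = ⟪p - x, z - p⟫ := by rw [← inner_neg_neg, neg_sub, neg_sub]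
    rw [← sub_add_sub_cancel x p z, norm_add_sq_real, hflip, norm_sub_rev x p]
  rw [← sq_le_sq₀ (norm_nonneg _) (norm_nonneg _)]
  linarith

section Smooth

variable {E : Type*} [NormedAddCommGroup E] [InnerProductSpace ℝ E] [CompleteSpace E]
  {f : E → ℝ} {f' : E → E}

theorem HasGradientAt.hasDerivAt_comp_lineMap {x y g : E} {t : ℝ}
    (hf : HasGradientAt f g (lineMap x y t)) :
    HasDerivAt (f ∘ lineMap x y) ⟪g, y - x⟫ t := by
  simpa using hf.hasFDerivAt.comp_hasDerivAt t hasDerivAt_lineMap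

theorem ConvexOn.inner_gradient_le_sub (hf : ConvexOn ℝ univ f) {x g : E}
    (hg : HasGradientAt f g x) (y : E) : ⟪g, y - x⟫ ≤ f y - f x := by
  have hline : ConvexOn ℝ univ (f ∘ lineMap x y) := hf.comp_affineMap (lineMap x y)
  have := hline.le_slope_of_hasDerivAt (mem_univ 0) (mem_univ 1) one_pos
    (HasGradientAt.hasDerivAt_comp_lineMap (by simpa using hg))
  simpa [slope_def_field] using this

theorem le_add_inner_gradient_add_sq_of_lipschitz {L : ℝ} (hf : ∀ y, HasGradientAt f (f' y) y)
    (hL : ∀ x y, ‖f' x - f' y‖ ≤ L * ‖x - y‖) (x y : E) :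
    f y ≤ f x + ⟪f' x, y - x⟫ + L / 2 * ‖y - x‖ ^ 2 := by
  set v := y - x
  set B : ℝ → ℝ := fun t => f x + t * ⟪f' x, v⟫ + L / 2 * ‖v‖ ^ 2 * t ^ 2
  have hφ : ∀ t, HasDerivAt (f ∘ lineMap x y) ⟪f' (lineMap x y t), v⟫ t :=
    fun t => (hf _).hasDerivAt_comp_lineMap
  have hB : ∀ t, HasDerivAt B (⟪f' x, v⟫ + L * ‖v‖ ^ 2 * t) t := by
    intro t
    exact ((((hasDerivAt_id t).mul_const _).const_add (f x)).add
      ((hasDerivAt_pow 2 t).const_mul (L / 2 * ‖v‖ ^ 2))).congr_deriv (by ring)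
  have hslope : ∀ t, 0 ≤ t → ⟪f' (lineMap x y t), v⟫ ≤ ⟪f' x, v⟫ + L * ‖v‖ ^ 2 * t := by
    intro t ht
    calc ⟪f' (lineMap x y t), v⟫ = ⟪f' x, v⟫ + ⟪f' (lineMap x y t) - f' x, v⟫ := by
          rw [inner_sub_left]; ring
      _ ≤ ⟪f' x, v⟫ + ‖f' (lineMap x y t) - f' x‖ * ‖v‖ := by
          gcongr; exact real_inner_le_norm _ _
      _ ≤ ⟪f' x, v⟫ + L * (t * ‖v‖) * ‖v‖ := by
          gcongr
          simpa [lineMap_apply_module', norm_smul, abs_of_nonneg ht] using hL (lineMap x y t) x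
      _ = ⟪f' x, v⟫ + L * ‖v‖ ^ 2 * t := by ring
  have := image_le_of_deriv_right_le_deriv_boundary (f := f ∘ lineMap x y) (B := B)
    (fun t _ => (hφ t).continuousAt.continuousWithinAt) (fun t _ => (hφ t).hasDerivWithinAt)
    (by simp [B]) (fun t _ => (hB t).continuousAt.continuousWithinAt)
    (fun t _ => (hB t).hasDerivWithinAt) (fun t ht => hslope t ht.1) (right_mem_Icc.2 zero_le_one)
  simpa [B] using this

theorem inner_gradient_sub_le_of_convexOn_of_lipschitz {L : ℝ} (hconv : ConvexOn ℝ univ f)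
    (hf : ∀ y, HasGradientAt f (f' y) y) (hL : ∀ x y, ‖f' x - f' y‖ ≤ L * ‖x - y‖) (x p z : E) :
    ⟪f' x, z - p⟫ - L / 2 * ‖p - x‖ ^ 2 ≤ f z - f p := by
  have hlow := hconv.inner_gradient_le_sub (hf x) z
  have hup := le_add_inner_gradient_add_sq_of_lipschitz hf hL x p
  have hsplit : ⟪f' x, z - p⟫ = ⟪f' x, z - x⟫ - ⟪f' x, p - x⟫ := by
    rw [← inner_sub_right, sub_sub_sub_cancel_right]
  linarith

end Smooth

theorem EReal.ne_top_of_add_coe_le {u w : EReal} {c c' : ℝ} (h : u + c ≤ w + c') (hw : w ≠ ⊤) :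
    u ≠ ⊤ := by
  rintro rfl
  rw [EReal.top_add_coe, top_le_iff] at h
  exact EReal.add_ne_top hw (EReal.coe_ne_top c') h

theorem IsProx.smul_sub_le_inner {d : ℕ} {g : EuclideanSpace ℝ (Fin d) → EReal} {α : ℝ}
    (hα : 0 < α) (hg : ERealConvex g) {y p z : EuclideanSpace ℝ (Fin d)} (hp : IsProx g α y p)
    {a b : ℝ} (ha : g p = a) (hb : g z = b) :
    α * (a - b) ≤ ⟪p - y, z - p⟫ := by
  set I := ⟪p - y, z - p⟫
  set M := ‖z - p‖ ^ 2
  have hseg : ∀ t ∈ Ioc (0 : ℝ) 1, α * (a - b) ≤ I + t * (M / 2) := by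
    rintro t ⟨ht0, ht1⟩
    have hconv : g ((1 - t) • p + t • z) ≤ ((1 - t) * a + t * b : ℝ) := by
      simpa [ha, hb] using hg p z (1 - t) t (by linarith) ht0.le (by ring)
    have hmin : a + 1 / (2 * α) * ‖p - y‖ ^ 2
        ≤ (1 - t) * a + t * b + 1 / (2 * α) * ‖(p - y) + t • (z - p)‖ ^ 2 := by
      have h := (hp ((1 - t) • p + t • z)).trans (add_le_add_left hconv _)
      rw [ha, ← EReal.coe_add, ← EReal.coe_add, EReal.coe_le_coe_iff] at h
      rwa [show (1 - t) • p + t • z - y = (p - y) + t • (z - p) by module] at h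
    rw [norm_add_sq_real, norm_smul, real_inner_smul_right, mul_pow, Real.norm_eq_abs,
      sq_abs] at hmin
    have hscaled : t * (α * (a - b)) ≤ t * (I + t * (M / 2)) := by
      field_simp at hmin
      nlinarith
    exact le_of_mul_le_mul_left hscaled ht0
  have hlim : Tendsto (fun t : ℝ => I + t * (M / 2)) (𝓝[>] 0) (𝓝 I) := by
    have : Continuous (fun t : ℝ => I + t * (M / 2)) := by fun_prop
    simpa using (this.tendsto 0).mono_left nhdsWithin_le_nhds
  exact ge_of_tendsto hlim (eventually_of_mem (Ioc_mem_nhdsGT zero_lt_one) hseg)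

theorem proxGrad_fejer_general {d : ℕ} {L : ℝ}
    (g : EuclideanSpace ℝ (Fin d) → EReal)
    (hg_proper : ERealProper g) (hg_convex : ERealConvex g)
    (f : EuclideanSpace ℝ (Fin d) → ℝ)
    (f' : EuclideanSpace ℝ (Fin d) → EuclideanSpace ℝ (Fin d))
    (hf_convex : ConvexOn ℝ Set.univ f)
    (hf_diff : ∀ y, HasGradientAt f (f' y) y)
    (hf_lip : ∀ x y, ‖f' x - f' y‖ ≤ L * ‖x - y‖)
    (α : ℕ → ℝ) (hα : ∀ k, 0 < α k ∧ α k ≤ 1 / L)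
    (x : ℕ → EuclideanSpace ℝ (Fin d))
    (hx : ∀ k, IsProx g (α k) (x k - α k • f' (x k)) (x (k + 1)))
    (z : EuclideanSpace ℝ (Fin d))
    (hz : ∀ w, g z + (f z : EReal) ≤ g w + (f w : EReal)) :
    ∀ k, ‖x (k + 1) - z‖ ≤ ‖x k - z‖ := by
  intro k
  obtain ⟨hg_bot, w, hw⟩ := hg_proper
  obtain ⟨hα_pos, hα_le⟩ := hα k
  have hαL : α k * L ≤ 1 := (le_div_iff₀ (one_div_pos.1 (hα_pos.trans_le hα_le))).1 hα_le
  have hz_top : g z ≠ ⊤ := EReal.ne_top_of_add_coe_le (hz w) hw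
  have hp_top : g (x (k + 1)) ≠ ⊤ := EReal.ne_top_of_add_coe_le (hx k z) hz_top
  have hb := (EReal.coe_toReal hz_top (hg_bot z)).symm
  have ha := (EReal.coe_toReal hp_top (hg_bot (x (k + 1)))).symm
  have hprox := (hx k).smul_sub_le_inner hα_pos hg_convex ha hb
  have hmin : (g z).toReal + f z ≤ (g (x (k + 1))).toReal + f (x (k + 1)) := by
    have := hz (x (k + 1))
    rwa [ha, hb, ← EReal.coe_add, ← EReal.coe_add, EReal.coe_le_coe_iff] at this
  have hf := inner_gradient_sub_le_of_convexOn_of_lipschitz hf_convex hf_diff hf_lip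
    (x k) (x (k + 1)) z
  have hsplit : ⟪x (k + 1) - (x k - α k • f' (x k)), z - x (k + 1)⟫
      = ⟪x (k + 1) - x k, z - x (k + 1)⟫ + α k * ⟪f' (x k), z - x (k + 1)⟫ := by
    rw [sub_sub_eq_add_sub, add_sub_right_comm, inner_add_left, real_inner_smul_left]
  have hkey : -(α k * L / 2 * ‖x (k + 1) - x k‖ ^ 2) ≤ ⟪x (k + 1) - x k, z - x (k + 1)⟫ := by
    linarith [mul_le_mul_of_nonneg_left hf hα_pos.le, mul_le_mul_of_nonneg_left hmin hα_pos.le]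
  apply norm_sub_le_of_neg_half_le_inner
  linarith [mul_le_mul_of_nonneg_right hαL (sq_nonneg ‖x (k + 1) - x k‖)]

/-- Fejér monotonicity: the proximal-gradient iterates with stepsizes `0 < α_k ≤ 1/L`
do not increase the distance to any global minimizer of `g + f`. -/
theorem proxGrad_fejer {d : ℕ} {L : ℝ}
    (g : EuclideanSpace ℝ (Fin d) → EReal)
    (hg_proper : ERealProper g) (hg_convex : ERealConvex g)
    (hg_lsc : LowerSemicontinuous g)
    (f : EuclideanSpace ℝ (Fin d) → ℝ)
    (f' : EuclideanSpace ℝ (Fin d) → EuclideanSpace ℝ (Fin d))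
    (hf_convex : ConvexOn ℝ Set.univ f)
    (hf_diff : ∀ y, HasGradientAt f (f' y) y)
    (hf_lip : ∀ x y, ‖f' x - f' y‖ ≤ L * ‖x - y‖)
    (α : ℕ → ℝ) (hα : ∀ k, 0 < α k ∧ α k ≤ 1 / L)
    (x : ℕ → EuclideanSpace ℝ (Fin d))
    (hx : ∀ k, IsProx g (α k) (x k - α k • f' (x k)) (x (k + 1)))
    (z : EuclideanSpace ℝ (Fin d))
    (hz : ∀ w, g z + (f z : EReal) ≤ g w + (f w : EReal)) :
    ∀ k, ‖x (k + 1) - z‖ ≤ ‖x k - z‖ :=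
  proxGrad_fejer_general g hg_proper hg_convex f f' hf_convex hf_diff hf_lip α hα x hx z hz
end

section
/- Let C₁, …, C_n ⊆ ℝ^d be nonempty closed convex sets, let x₀ ∈ ℝ^d, and define the averaged-projection sequence x_{k+1} = (1/n) Σ_{i=1}^n P_{C_i}(x_k) for all k ≥ 0. Then the sequence (x_k)_{k∈ℕ} is self-contracted. -/
/-!
Averaged projection is gradient descent with step `1 / n` on the convex, `n`-smooth function
`g y = ∑ i, ‖y - P_{C_i} y‖²` (with gradient `2 ∑ i, (y - P_{C_i} y) = 2n (y - T y)`).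
Smoothness gives the descent `g (T y) + n ‖y - T y‖² ≤ g y`, so `g` decreases along the orbit;
combined with convexity it yields `‖y - T y‖² ≤ 2 ⟪y - T y, y - z⟫` for every later iterate `z`,
which is exactly the one-step inequality `‖z - T y‖ ≤ ‖z - y‖`.
-/

open Finset RealInnerProductSpace

/-- `p = P_A(x)`: `p` belongs to `A` and minimizes the distance to `x` over `A`
(for a nonempty closed convex set such a point is unique). -/
def IsProjOn {d : ℕ} (A : Set (EuclideanSpace ℝ (Fin d)))
    (x p : EuclideanSpace ℝ (Fin d)) : Prop :=
  p ∈ A ∧ ∀ a ∈ A, ‖x - p‖ ≤ ‖x - a‖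

section Projection

variable {E : Type*} [NormedAddCommGroup E] [InnerProductSpace ℝ E] {K : Set E} {y p : E}

lemma inner_sub_le_zero_of_forall_norm_sub_le (hK : Convex ℝ K) (hp : p ∈ K)
    (hmin : ∀ a ∈ K, ‖y - p‖ ≤ ‖y - a‖) {a : E} (ha : a ∈ K) : ⟪y - p, a - p⟫ ≤ 0 := by
  have : Nonempty K := ⟨⟨p, hp⟩⟩
  have hbdd : BddBelow (Set.range fun w : K => ‖y - w‖) :=
    ⟨0, by rintro r ⟨w, rfl⟩; exact norm_nonneg _⟩
  have hinf : ‖y - p‖ = ⨅ w : K, ‖y - w‖ :=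
    le_antisymm (le_ciInf fun w => hmin w w.2) (ciInf_le hbdd ⟨p, hp⟩)
  exact (norm_eq_iInf_iff_real_inner_le_zero hK hp).mp hinf a ha

/-- The squared distance to a convex set is convex, with `2 (y - p)` as a subgradient at `y`. -/
lemma sq_norm_sub_le_sq_norm_sub_add_inner (hK : Convex ℝ K) (hp : p ∈ K)
    (hmin : ∀ a ∈ K, ‖y - p‖ ≤ ‖y - a‖) (z : E) {q : E} (hq : q ∈ K) :
    ‖y - p‖ ^ 2 ≤ ‖z - q‖ ^ 2 + 2 * ⟪y - p, y - z⟫ := by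
  have hvi : ⟪y - p, q - p⟫ ≤ 0 := inner_sub_le_zero_of_forall_norm_sub_le hK hp hmin hq
  rw [show z - q = (y - p) - ((y - z) + (q - p)) by abel,
    norm_sub_sq_real (y - p), inner_add_right]
  nlinarith [sq_nonneg ‖(y - z) + (q - p)‖]

end Projection

section AveragedProjection

variable {E ι : Type*} [NormedAddCommGroup E] [InnerProductSpace ℝ E] [Fintype ι]

noncomputable def averagedProjection (P : ι → E → E) (y : E) : E :=
  (Fintype.card ι : ℝ)⁻¹ • ∑ i, P i y

lemma sum_sub_eq_card_smul_sub_averagedProjection [Nonempty ι] (P : ι → E → E) (y : E) :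
    ∑ i, (y - P i y) = (Fintype.card ι : ℝ) • (y - averagedProjection P y) := by
  rw [averagedProjection, smul_sub, smul_inv_smul₀ (by positivity), sum_sub_distrib, sum_const,
    card_univ, Nat.cast_smul_eq_nsmul]

variable {K : ι → Set E} {P : ι → E → E}

lemma sum_sq_norm_sub_averagedProjection_add_le [Nonempty ι]
    (hP : ∀ i y, P i y ∈ K i ∧ ∀ a ∈ K i, ‖y - P i y‖ ≤ ‖y - a‖) (y : E) :
    ∑ i, ‖averagedProjection P y - P i (averagedProjection P y)‖ ^ 2
      + Fintype.card ι * ‖y - averagedProjection P y‖ ^ 2 ≤ ∑ i, ‖y - P i y‖ ^ 2 := by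
  set w := averagedProjection P y
  have hsmooth : ∀ i,
      ‖w - P i w‖ ^ 2 ≤ ‖y - P i y‖ ^ 2 + 2 * ⟪y - P i y, w - y⟫ + ‖w - y‖ ^ 2 := by
    intro i
    have hle := pow_le_pow_left₀ (norm_nonneg _) ((hP i w).2 _ (hP i y).1) 2
    rwa [show w - P i y = (y - P i y) + (w - y) by abel, norm_add_sq_real] at hle
  have hsum := sum_le_sum fun i (_ : i ∈ univ) => hsmooth i
  rw [sum_add_distrib, sum_add_distrib, ← mul_sum, ← sum_inner,
    sum_sub_eq_card_smul_sub_averagedProjection, sum_const, card_univ, nsmul_eq_mul,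
    real_inner_smul_left, show w - y = -(y - w) by abel, inner_neg_right,
    real_inner_self_eq_norm_sq, norm_neg] at hsum
  linarith

lemma sum_sq_norm_sub_le_add_inner_averagedProjection [Nonempty ι] (hK : ∀ i, Convex ℝ (K i))
    (hP : ∀ i y, P i y ∈ K i ∧ ∀ a ∈ K i, ‖y - P i y‖ ≤ ‖y - a‖) (y z : E) :
    ∑ i, ‖y - P i y‖ ^ 2 ≤ ∑ i, ‖z - P i z‖ ^ 2
      + 2 * Fintype.card ι * ⟪y - averagedProjection P y, y - z⟫ := by
  have hsum := sum_le_sum fun i (_ : i ∈ univ) =>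
    sq_norm_sub_le_sq_norm_sub_add_inner (hK i) (hP i y).1 (hP i y).2 z (hP i z).1
  rw [sum_add_distrib, ← mul_sum, ← sum_inner, sum_sub_eq_card_smul_sub_averagedProjection,
    real_inner_smul_left] at hsum
  linarith

end AveragedProjection

lemma antitone_comp_of_descent {E : Type*} [SeminormedAddCommGroup E] {T : E → E} {g : E → ℝ}
    {c : ℝ} (hc : 0 ≤ c) (hdesc : ∀ y, g (T y) + c * ‖y - T y‖ ^ 2 ≤ g y)
    {x : ℕ → E} (hx : ∀ k, x (k + 1) = T (x k)) : Antitone (g ∘ x) :=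
  antitone_nat_of_succ_le fun k => by
    simpa only [Function.comp_apply, hx] using
      (le_add_of_nonneg_right (mul_nonneg hc (sq_nonneg _))).trans (hdesc (x k))

lemma norm_sub_apply_le_of_descent {E : Type*} [NormedAddCommGroup E] [InnerProductSpace ℝ E]
    {T : E → E} {g : E → ℝ} {c : ℝ} (hc : 0 < c)
    (hdesc : ∀ y, g (T y) + c * ‖y - T y‖ ^ 2 ≤ g y)
    (hconv : ∀ y z, g y ≤ g z + 2 * c * ⟪y - T y, y - z⟫) {y z : E} (hz : g z ≤ g (T y)) :
    ‖z - T y‖ ≤ ‖z - y‖ := by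
  have hacute : ‖y - T y‖ ^ 2 ≤ 2 * ⟪y - T y, y - z⟫ := by
    refine le_of_mul_le_mul_left ?_ hc
    linarith [hdesc y, hconv y z]
  have hsq : ‖z - T y‖ ^ 2 ≤ ‖z - y‖ ^ 2 := by
    rw [show z - T y = (z - y) + (y - T y) by abel, norm_add_sq_real,
      show z - y = -(y - z) by abel, inner_neg_left, real_inner_comm, norm_neg]
    linarith
  exact (sq_le_sq₀ (norm_nonneg _) (norm_nonneg _)).mp hsq

lemma SelfContracted.of_norm_sub_succ_le {d : ℕ} {x : ℕ → EuclideanSpace ℝ (Fin d)}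
    (h : ∀ k m, k < m → ‖x m - x (k + 1)‖ ≤ ‖x m - x k‖) : SelfContracted x := by
  intro k₁ k₂ k₃ h12 h23
  induction k₂, h12 using Nat.le_induction with
  | base => rfl
  | succ k₂ _ ih => exact (h k₂ k₃ h23).trans (ih (Nat.le_of_succ_le h23))

theorem averagedProjections_selfContracted_general {d n : ℕ} (hn : 0 < n)
    (C : Fin n → Set (EuclideanSpace ℝ (Fin d)))
    (hC_cv : ∀ i, Convex ℝ (C i))
    (P : Fin n → EuclideanSpace ℝ (Fin d) → EuclideanSpace ℝ (Fin d))
    (hP : ∀ i x, IsProjOn (C i) x (P i x))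
    (x : ℕ → EuclideanSpace ℝ (Fin d))
    (hx : ∀ k, x (k + 1) = (n : ℝ)⁻¹ • ∑ i, P i (x k)) :
    SelfContracted x := by
  have : Nonempty (Fin n) := ⟨⟨0, hn⟩⟩
  set g := fun y => ∑ i, ‖y - P i y‖ ^ 2
  have hxT : ∀ k, x (k + 1) = averagedProjection P (x k) := by
    simpa only [averagedProjection, Fintype.card_fin] using hx
  have hdesc : ∀ y, g (averagedProjection P y) + (Fintype.card (Fin n) : ℝ)
      * ‖y - averagedProjection P y‖ ^ 2 ≤ g y :=
    sum_sq_norm_sub_averagedProjection_add_le hP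
  have hconv : ∀ y z, g y ≤ g z
      + 2 * (Fintype.card (Fin n) : ℝ) * ⟪y - averagedProjection P y, y - z⟫ :=
    sum_sq_norm_sub_le_add_inner_averagedProjection hC_cv hP
  have hanti := antitone_comp_of_descent (Nat.cast_nonneg _) hdesc hxT
  refine SelfContracted.of_norm_sub_succ_le fun k m hkm => ?_
  rw [hxT]
  refine norm_sub_apply_le_of_descent (by positivity) hdesc hconv ?_
  rw [← hxT]
  exact hanti hkm

/-- The averaged projection method onto finitely many nonempty closed convex sets
generates a self-contracted sequence. -/
theorem averagedProjections_selfContracted {d n : ℕ} (hn : 0 < n)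
    (C : Fin n → Set (EuclideanSpace ℝ (Fin d)))
    (hC_ne : ∀ i, (C i).Nonempty) (hC_cl : ∀ i, IsClosed (C i))
    (hC_cv : ∀ i, Convex ℝ (C i))
    (P : Fin n → EuclideanSpace ℝ (Fin d) → EuclideanSpace ℝ (Fin d))
    (hP : ∀ i x, IsProjOn (C i) x (P i x))
    (x₀ : EuclideanSpace ℝ (Fin d))
    (x : ℕ → EuclideanSpace ℝ (Fin d)) (hx0 : x 0 = x₀)
    (hx : ∀ k, x (k + 1) = (n : ℝ)⁻¹ • ∑ i, P i (x k)) :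
    SelfContracted x :=
  averagedProjections_selfContracted_general hn C hC_cv P hP x hx
end
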